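/- The matrix (I_n - J_n)³ A_n (I_n - J_nᵀ)³ is zero outside its lower-right 3×3 corner, and that corner equals the matrix R = [[0,1,1],[1,-6,1],[1,1,0]]. -/

import Mathlib

/-!
Since `(j - i)² = j² - 2ij + i²`, the matrix `A` is a sum of three rank-one matrices `u vᵀ`
whose factors are the power vectors `k ↦ kᵖ`, `p ≤ 2`. Extending vectors by zero past the last
index, `1 - J` acts as the difference `f k - f (k + 1)`, so the sandwich turns each `u vᵀ` into
`(Δ³u)(Δ³v)ᵀ`. A third difference of a quadratic vanishes as long as it only sees indices below
`n`, i.e. away from the last three; there the truncation leaves explicit values, which give `R`.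
-/

open Matrix

section ShiftMatrix

variable {R : Type*} [Ring R] {n : ℕ}

def negFwdDiff (f : ℕ → R) (k : ℕ) : R := f k - f (k + 1)

lemma one_sub_shift_mulVec (J : Matrix (Fin n) (Fin n) R)
    (hJ : ∀ i j : Fin n, J i j = if i.val + 1 = j.val then 1 else 0)
    (f : ℕ → R) (hf : ∀ k, n ≤ k → f k = 0) :
    (1 - J) *ᵥ (fun i : Fin n => f i) = fun i : Fin n => negFwdDiff f i := by
  ext i
  suffices hJf : (J *ᵥ fun j : Fin n => f j) i = f (i + 1) by
    rw [sub_mulVec, one_mulVec, Pi.sub_apply, hJf, negFwdDiff]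
  simp only [mulVec, dotProduct, hJ, ite_mul, one_mul, zero_mul]
  by_cases hi : i.val + 1 < n
  · rw [Finset.sum_eq_single ⟨i + 1, hi⟩ (fun j _ hj => if_neg fun h => hj (Fin.ext h.symm))
      (by simp), if_pos rfl]
  · rw [hf _ (not_lt.mp hi)]
    exact Finset.sum_eq_zero fun j _ => if_neg (by omega)

lemma one_sub_shift_pow_mulVec (J : Matrix (Fin n) (Fin n) R)
    (hJ : ∀ i j : Fin n, J i j = if i.val + 1 = j.val then 1 else 0)
    (p : ℕ) (f : ℕ → R) (hf : ∀ k, n ≤ k → f k = 0) :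
    (1 - J) ^ p *ᵥ (fun i : Fin n => f i) = fun i : Fin n => negFwdDiff^[p] f i := by
  induction p generalizing f with
  | zero => simp
  | succ p ih =>
    rw [pow_succ, ← mulVec_mulVec, one_sub_shift_mulVec J hJ f hf, Function.iterate_succ_apply]
    exact ih _ fun k hk => by rw [negFwdDiff, hf k hk, hf (k + 1) (by omega), sub_zero]

end ShiftMatrix

lemma mul_vecMulVec_mul_transpose {R m n : Type*} [CommRing R] [Fintype m] [Fintype n]
    (M : Matrix m m R) (N : Matrix n n R) (u : m → R) (v : n → R) :
    M * vecMulVec u v * Nᵀ = vecMulVec (M *ᵥ u) (N *ᵥ v) := by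
  rw [mul_vecMulVec, vecMulVec_mul, vecMul_transpose]

section TruncatedPowers

variable {R : Type*} [CommRing R]

-- The zero extension past `n` is what makes `1 - J` a difference operator up to the last row.
def truncPow (n p k : ℕ) : R := if k < n then (k : R) ^ p else 0

lemma sq_sub_matrix_eq_vecMulVec_truncPow {n : ℕ} (A : Matrix (Fin n) (Fin n) R)
    (hA : ∀ i j : Fin n, A i j = ((j : R) - i) ^ 2) :
    A = vecMulVec (fun i : Fin n => truncPow n 0 i) (fun i : Fin n => truncPow n 2 i) +
      vecMulVec (fun i : Fin n => truncPow n 2 i) (fun i : Fin n => truncPow n 0 i) -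
      (2 : R) • vecMulVec (fun i : Fin n => truncPow n 1 i) (fun i : Fin n => truncPow n 1 i) := by
  ext i j
  simp only [Matrix.sub_apply, Matrix.add_apply, Matrix.smul_apply, vecMulVec_apply, hA, truncPow,
    Fin.is_lt, if_true, smul_eq_mul]
  ring

lemma truncPow_of_le {n p k : ℕ} (hk : n ≤ k) : truncPow n p k = (0 : R) := if_neg (by omega)

def truncPowDiff (n p : ℕ) : ℕ → R := negFwdDiff^[3] (truncPow n p)

lemma truncPowDiff_of_lt {n p k : ℕ} (hp : p ≤ 2) (hk : k + 3 < n) :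
    truncPowDiff n p k = (0 : R) := by
  simp only [truncPowDiff, Function.iterate_succ_apply', Function.iterate_zero_apply, negFwdDiff,
    truncPow]
  rw [if_pos (by omega), if_pos (by omega), if_pos (by omega), if_pos (by omega)]
  interval_cases p <;> push_cast <;> ring

lemma one_sub_shift_pow_mul_sq_sub_mul_transpose_pow_apply {n : ℕ} (A J : Matrix (Fin n) (Fin n) R)
    (hA : ∀ i j : Fin n, A i j = ((j : R) - i) ^ 2)
    (hJ : ∀ i j : Fin n, J i j = if i.val + 1 = j.val then 1 else 0) (i j : Fin n) :
    ((1 - J) ^ 3 * A * (1 - J)ᵀ ^ 3 : Matrix (Fin n) (Fin n) R) i j =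
      (truncPowDiff n 0 i * truncPowDiff n 2 j + truncPowDiff n 2 i * truncPowDiff n 0 j -
        2 * (truncPowDiff n 1 i * truncPowDiff n 1 j) : R) := by
  have hv (p : ℕ) := one_sub_shift_pow_mulVec J hJ 3 (truncPow n p) fun _ => truncPow_of_le
  rw [← transpose_pow, sq_sub_matrix_eq_vecMulVec_truncPow A hA]
  simp only [Matrix.mul_add, Matrix.mul_sub, Matrix.add_mul, Matrix.sub_mul, Matrix.mul_smul,
    Matrix.smul_mul, mul_vecMulVec_mul_transpose, hv, Matrix.add_apply, Matrix.sub_apply,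
    Matrix.smul_apply, vecMulVec_apply, smul_eq_mul, truncPowDiff]

lemma truncPowDiff_corner (m : ℕ) (a b : Fin 3) :
    truncPowDiff (m + 3) 0 (m + a) * truncPowDiff (m + 3) 2 (m + b) +
        truncPowDiff (m + 3) 2 (m + a) * truncPowDiff (m + 3) 0 (m + b) -
        2 * (truncPowDiff (m + 3) 1 (m + a) * truncPowDiff (m + 3) 1 (m + b)) =
      (!![0, 1, 1; 1, -6, 1; 1, 1, 0] a b : R) := by
  fin_cases a <;> fin_cases b <;>
  · simp [truncPowDiff, negFwdDiff, truncPow]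
    ring

end TruncatedPowers

theorem stmt_6 (n : ℕ) (hn : 3 ≤ n)
    (A : Matrix (Fin n) (Fin n) ℝ)
    (hA : ∀ i j : Fin n, A i j = ((j.val : ℝ) - (i.val : ℝ)) ^ 2)
    (J : Matrix (Fin n) (Fin n) ℝ)
    (hJ : ∀ i j : Fin n, J i j = if i.val + 1 = j.val then 1 else 0)
    (R : Matrix (Fin 3) (Fin 3) ℝ)
    (hR : R = !![0, 1, 1; 1, -6, 1; 1, 1, 0])
    (B : Matrix (Fin n) (Fin n) ℝ)
    (hB : B = (1 - J) ^ 3 * A * ((1 - J)ᵀ) ^ 3) :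
    (∀ i j : Fin n, (i.val < n - 3 ∨ j.val < n - 3) → B i j = 0) ∧
    (∀ a b : Fin 3,
      B ⟨n - 3 + a.val, by have := a.isLt; omega⟩
        ⟨n - 3 + b.val, by have := b.isLt; omega⟩ = R a b) := by
  obtain ⟨m, rfl⟩ : ∃ m, n = m + 3 := ⟨n - 3, by omega⟩
  have hBij := one_sub_shift_pow_mul_sq_sub_mul_transpose_pow_apply A J hA hJ
  subst hB hR
  refine ⟨fun i j hij => ?_, fun a b => ?_⟩
  · rw [hBij]
    rcases hij with hi | hj
    · simp [truncPowDiff_of_lt, show i.val + 3 < m + 3 by omega]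
    · simp [truncPowDiff_of_lt, show j.val + 3 < m + 3 by omega]
  · rw [hBij]
    simpa only [Nat.add_sub_cancel] using truncPowDiff_corner m a b
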